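/- In Minkowski space, let β : I → ℝ^4 be an observer (smooth timelike future-pointing curve with unit 4-velocity). Then the past light cones E^-_{β(t)} = {x : x - β(t) is past-pointing lightlike} for distinct t ∈ I are pairwise disjoint, and hence the family {E^-_{β(t)}}_{t ∈ I} partitions its union ∪_{t∈I} E^-_{β(t)} (the leaves of the past-pointing horismos foliation generated by β). -/

import Mathlib

abbrev Mink : Type := Fin 4 → ℝ

def mg (x y : Mink) : ℝ := -(x 0 * y 0) + x 1 * y 1 + x 2 * y 2 + x 3 * y 3

def PastLightlike (v : Mink) : Prop := mg v v = 0 ∧ v ≠ 0 ∧ v 0 < 0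

set_option maxHeartbeats 1000000 in
open Set intervalIntegral in
lemma timelike_sep (I : Set ℝ) (hI : Convex ℝ I)
    (β : ℝ → Mink) (hsmooth : ContDiff ℝ (⊤ : ℕ∞) β)
    (hunit : ∀ t ∈ I, mg (deriv β t) (deriv β t) = -1)
    (hfut : ∀ t ∈ I, 0 < deriv β t 0)
    {t₁ t₂ : ℝ} (h1 : t₁ ∈ I) (h2 : t₂ ∈ I) (hlt : t₁ < t₂) :
    0 < (β t₂ - β t₁) 0 ∧ mg (β t₂ - β t₁) (β t₂ - β t₁) < 0 := by
  have hdiff : Differentiable ℝ β := hsmooth.differentiable (by simp)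
  have hcont : Continuous (deriv β) := hsmooth.continuous_deriv (by simp)
  have hconti : ∀ i, Continuous (fun t => deriv β t i) :=
    fun i => (continuous_apply i).comp hcont
  have hIcc : Set.Icc t₁ t₂ ⊆ I := hI.ordConnected.out h1 h2
  have hint : ∀ i, β t₂ i - β t₁ i = ∫ t in t₁..t₂, deriv β t i := by
    intro i
    refine (integral_eq_sub_of_hasDerivAt (f := fun t => β t i)
      (f' := fun t => deriv β t i) (fun t _ => ?_)
      ((hconti i).intervalIntegrable _ _)).symm
    exact hasDerivAt_pi.1 (hdiff t).hasDerivAt i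
  set Δ : Fin 4 → ℝ := fun i => β t₂ i - β t₁ i with hΔ
  have hpt : ∀ t ∈ Set.Ioo t₁ t₂, 0 < deriv β t 0 ∧
      (deriv β t 0)^2 = 1 + (deriv β t 1)^2 + (deriv β t 2)^2 + (deriv β t 3)^2 := by
    intro t ht
    have htI : t ∈ I := hIcc ⟨ht.1.le, ht.2.le⟩
    have := hunit t htI
    unfold mg at this
    exact ⟨hfut t htI, by nlinarith [this]⟩
  have hΔ0 : 0 < Δ 0 := by
    rw [hΔ]; simp only
    rw [hint 0]
    exact intervalIntegral_pos_of_pos_on ((hconti 0).intervalIntegrable _ _)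
      (fun t ht => (hpt t ht).1) hlt
  refine ⟨hΔ0, ?_⟩
  set S : ℝ := (Δ 1)^2 + (Δ 2)^2 + (Δ 3)^2 with hS
  have hSnn : 0 ≤ S := by positivity
  have hmg : mg (β t₂ - β t₁) (β t₂ - β t₁) = -(Δ 0)^2 + S := by
    rw [hS]; unfold mg; simp only [Pi.sub_apply, hΔ]; ring
  rw [hmg]
  rcases eq_or_lt_of_le hSnn with hS0 | hSpos
  · rw [← hS0]; nlinarith [hΔ0]
  · set q : ℝ := Real.sqrt S with hq
    have hq0 : 0 < q := Real.sqrt_pos.mpr hSpos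
    have hq2 : q^2 = S := Real.sq_sqrt hSnn
    have c0 : Continuous (fun t => q * deriv β t 0) := continuous_const.mul (hconti 0)
    have c1 : Continuous (fun t => Δ 1 * deriv β t 1) := continuous_const.mul (hconti 1)
    have c2 : Continuous (fun t => Δ 2 * deriv β t 2) := continuous_const.mul (hconti 2)
    have c3 : Continuous (fun t => Δ 3 * deriv β t 3) := continuous_const.mul (hconti 3)
    have csum : Continuous (fun t =>
        Δ 1 * deriv β t 1 + Δ 2 * deriv β t 2 + Δ 3 * deriv β t 3) := (c1.add c2).add c3
    have key : 0 < ∫ t in t₁..t₂,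
        (q * deriv β t 0 - (Δ 1 * deriv β t 1 + Δ 2 * deriv β t 2 + Δ 3 * deriv β t 3)) := by
      refine intervalIntegral_pos_of_pos_on ((c0.sub csum).intervalIntegrable _ _) ?_ hlt
      intro t ht
      obtain ⟨hd0, hd2⟩ := hpt t ht
      set d0 := deriv β t 0; set d1 := deriv β t 1
      set d2 := deriv β t 2; set d3 := deriv β t 3
      have cs : (Δ 1 * d1 + Δ 2 * d2 + Δ 3 * d3)^2 ≤ S * (d1^2 + d2^2 + d3^2) := by
        rw [hS]
        nlinarith [sq_nonneg (Δ 1 * d2 - Δ 2 * d1), sq_nonneg (Δ 1 * d3 - Δ 3 * d1),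
          sq_nonneg (Δ 2 * d3 - Δ 3 * d2)]
      nlinarith [mul_pos hq0 hd0, sq_nonneg (q * d0), hq2, cs, hSpos,
        sq_nonneg (q * d0 - (Δ 1 * d1 + Δ 2 * d2 + Δ 3 * d3)),
        sq_nonneg (q * d0 + (Δ 1 * d1 + Δ 2 * d2 + Δ 3 * d3))]
    have hsplit : (∫ t in t₁..t₂,
        (q * deriv β t 0 - (Δ 1 * deriv β t 1 + Δ 2 * deriv β t 2 + Δ 3 * deriv β t 3)))
        = q * Δ 0 - (Δ 1 * Δ 1 + Δ 2 * Δ 2 + Δ 3 * Δ 3) := by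
      rw [integral_sub (c0.intervalIntegrable _ _) (csum.intervalIntegrable _ _),
        integral_add (f := fun t => Δ 1 * deriv β t 1 + Δ 2 * deriv β t 2) ((c1.add c2).intervalIntegrable _ _) (c3.intervalIntegrable _ _),
        integral_add (c1.intervalIntegrable _ _) (c2.intervalIntegrable _ _),
        integral_const_mul, integral_const_mul, integral_const_mul, integral_const_mul]
      simp only [hΔ]
      rw [← hint 0, ← hint 1, ← hint 2, ← hint 3]
    rw [hsplit] at key
    have hqΔ : S < q * Δ 0 := by nlinarith [key]
    nlinarith [hq2, hq0, hΔ0, hqΔ, mul_pos hq0 hΔ0, sq_nonneg (q - Δ 0)]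

set_option maxHeartbeats 1000000 in
/-- The past light cones of distinct events of an observer are pairwise
disjoint, so they partition their union: the leaves of the past-pointing
horismos foliation. -/
theorem horismos_foliation_disjoint (I : Set ℝ) (hI : Convex ℝ I)
    (β : ℝ → Mink) (hsmooth : ContDiff ℝ (⊤ : ℕ∞) β)
    (hunit : ∀ t ∈ I, mg (deriv β t) (deriv β t) = -1)
    (hfut : ∀ t ∈ I, 0 < deriv β t 0) :
    (∀ t₁ ∈ I, ∀ t₂ ∈ I, t₁ ≠ t₂ →
      {x : Mink | PastLightlike (x - β t₁)} ∩ {x : Mink | PastLightlike (x - β t₂)} = ∅) ∧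
    ∀ x ∈ ⋃ t ∈ I, {x : Mink | PastLightlike (x - β t)},
      ∃! t, t ∈ I ∧ PastLightlike (x - β t) := by
  have main : ∀ t₁ ∈ I, ∀ t₂ ∈ I, t₁ < t₂ → ∀ x : Mink,
      PastLightlike (x - β t₁) → PastLightlike (x - β t₂) → False := by
    intro t₁ h1 t₂ h2 hlt x hu hv
    obtain ⟨_, hmg⟩ := timelike_sep I hI β hsmooth hunit hfut h1 h2 hlt
    obtain ⟨hu0, -, hu1⟩ := hu
    obtain ⟨hv0, -, hv1⟩ := hv
    unfold mg at hmg hu0 hv0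
    simp only [Pi.sub_apply] at hmg hu0 hv0 hu1 hv1
    set u0 := x 0 - β t₁ 0; set u1 := x 1 - β t₁ 1
    set u2 := x 2 - β t₁ 2; set u3 := x 3 - β t₁ 3
    set v0 := x 0 - β t₂ 0; set v1 := x 1 - β t₂ 1
    set v2 := x 2 - β t₂ 2; set v3 := x 3 - β t₂ 3
    have e0 : β t₂ 0 - β t₁ 0 = u0 - v0 := by simp [u0, v0]
    have e1 : β t₂ 1 - β t₁ 1 = u1 - v1 := by simp [u1, v1]
    have e2 : β t₂ 2 - β t₁ 2 = u2 - v2 := by simp [u2, v2]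
    have e3 : β t₂ 3 - β t₁ 3 = u3 - v3 := by simp [u3, v3]
    rw [e0, e1, e2, e3] at hmg
    nlinarith [sq_nonneg (u1*v2 - u2*v1), sq_nonneg (u1*v3 - u3*v1), sq_nonneg (u2*v3 - u3*v2),
      mul_pos (neg_pos.mpr hu1) (neg_pos.mpr hv1),
      sq_nonneg (u0*v0 - (u1*v1 + u2*v2 + u3*v3)), sq_nonneg (u0*v0 + (u1*v1 + u2*v2 + u3*v3))]
  constructor
  · intro t₁ h1 t₂ h2 hne
    ext x
    simp only [Set.mem_inter_iff, Set.mem_setOf_eq, Set.mem_empty_iff_false, iff_false, not_and]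
    intro hx1 hx2
    rcases hne.lt_or_gt with h | h
    · exact main t₁ h1 t₂ h2 h x hx1 hx2
    · exact main t₂ h2 t₁ h1 h x hx2 hx1
  · intro x hx
    simp only [Set.mem_iUnion, Set.mem_setOf_eq] at hx
    obtain ⟨t, ht, hxt⟩ := hx
    refine ⟨t, ⟨ht, hxt⟩, ?_⟩
    intro s ⟨hs, hxs⟩
    by_contra hne
    rcases (Ne.lt_or_gt hne) with h | h
    · exact main s hs t ht h x hxs hxt
    · exact main t ht s hs h x hxt hxs
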